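/- Let N ≥ 1 and suppose Φ is a strong modular unit of weight 2ℓ for Γ₀(N). For each k ≥ ℓ, the map Ψ ↦ Ψ/Φ is a linear isomorphism from the subspace of forms in M_{2k}(Γ₀(N)) whose q-expansion valuation at the infinite cusp is at least ν(Φ), onto M_{2k−2ℓ}(Γ₀(N)). Consequently M_{2k}(Γ₀(N)) = Φ·M_{2k−2ℓ}(Γ₀(N)) ⊕ V, where V is spanned by the elements of an upper-triangular basis of M_{2k}(Γ₀(N)) whose valuation is less than ν(Φ). -/

import Mathlib

open UpperHalfPlane Filter ModularForm Complex

/-- `f` has q-expansion valuation exactly `n` at the infinite cusp. -/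
def HasValuationAtInf (f : ℍ → ℂ) (n : ℕ) : Prop :=
  ∃ a : ℂ, a ≠ 0 ∧
    Tendsto (fun τ : ℍ => f τ / Complex.exp (2 * Real.pi * Complex.I * n * τ))
      UpperHalfPlane.atImInfty (nhds a)

/-- `f` has q-expansion valuation at least `n` at the infinite cusp:
`f(τ)/q^n` has a finite limit as `Im τ → ∞`. -/
def ValuationAtInfGE (f : ℍ → ℂ) (n : ℕ) : Prop :=
  ∃ a : ℂ,
    Tendsto (fun τ : ℍ => f τ / Complex.exp (2 * Real.pi * Complex.I * n * τ))
      UpperHalfPlane.atImInfty (nhds a)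

/-- A strong modular unit of weight `k` at level `N`. -/
def IsStrongModularUnit {N : ℕ} {k : ℤ}
    (Φ : ModularForm (CongruenceSubgroup.Gamma0 N) k) : Prop :=
  (∀ τ : ℍ, Φ τ ≠ 0) ∧
  Tendsto Φ UpperHalfPlane.atImInfty (nhds 0) ∧
  ∀ γ : Matrix.SpecialLinearGroup (Fin 2) ℤ, γ ∉ CongruenceSubgroup.Gamma0 N →
    ∃ a : ℂ, a ≠ 0 ∧ Tendsto (⇑Φ ∣[k] γ) UpperHalfPlane.atImInfty (nhds a)

/-!
Since `Φ` vanishes nowhere on `ℍ` and has a nonzero limit at every cusp other than `∞`, the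
quotient `Ψ / Φ` of a form `Ψ` of weight `2k` is holomorphic and bounded at those cusps; at `∞`
it is bounded exactly when `ν(Ψ) ≥ ν(Φ)`. So `Ψ ↦ Ψ / Φ` inverts multiplication by `Φ` on the
forms with `ν(Ψ) ≥ ν(Φ)`. For the complement, a nonzero combination of elements of an
upper-triangular basis has the valuation of its lowest term.
-/

open Topology
open scoped MatrixGroups

local notation "𝕢" => Function.Periodic.qParam

section Valuation

lemma cexp_two_pi_I_mul_nat_mul (n : ℕ) (τ : ℍ) :
    cexp (2 * Real.pi * Complex.I * n * τ) = 𝕢 1 τ ^ n := by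
  rw [Function.Periodic.qParam, ← Complex.exp_nat_mul]
  congr 1
  push_cast
  ring

lemma tendsto_div_cexp_of_lt {f : ℍ → ℂ} {m n : ℕ} {a : ℂ} (hmn : m < n)
    (hf : Tendsto (fun τ : ℍ => f τ / cexp (2 * Real.pi * Complex.I * n * τ)) atImInfty (𝓝 a)) :
    Tendsto (fun τ : ℍ => f τ / cexp (2 * Real.pi * Complex.I * m * τ)) atImInfty (𝓝 0) := by
  have hq : Tendsto (fun τ : ℍ => 𝕢 1 τ ^ (n - m)) atImInfty (𝓝 0) := by
    simpa [zero_pow (Nat.sub_ne_zero_of_lt hmn)] using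
      (qParam_tendsto_atImInfty one_pos).pow (n - m)
  simp only [cexp_two_pi_I_mul_nat_mul] at hf ⊢
  refine (mul_zero a ▸ hf.mul hq).congr fun τ => ?_
  have hq0 : 𝕢 1 τ ≠ 0 := Complex.exp_ne_zero _
  rw [pow_sub₀ _ hq0 hmn.le]
  field_simp

lemma ValuationAtInfGE.tendsto_zero {f : ℍ → ℂ} {m n : ℕ} (hf : ValuationAtInfGE f n)
    (hmn : m < n) :
    Tendsto (fun τ : ℍ => f τ / cexp (2 * Real.pi * Complex.I * m * τ)) atImInfty (𝓝 0) :=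
  tendsto_div_cexp_of_lt hmn hf.choose_spec

lemma ValuationAtInfGE.mono {f : ℍ → ℂ} {m n : ℕ} (hf : ValuationAtInfGE f n) (hmn : m ≤ n) :
    ValuationAtInfGE f m := by
  rcases hmn.eq_or_lt with rfl | hlt
  · exact hf
  · exact ⟨0, hf.tendsto_zero hlt⟩

lemma HasValuationAtInf.valuationAtInfGE {f : ℍ → ℂ} {n : ℕ} (hf : HasValuationAtInf f n) :
    ValuationAtInfGE f n :=
  let ⟨a, _, ha⟩ := hf; ⟨a, ha⟩

lemma HasValuationAtInf.not_valuationAtInfGE {f : ℍ → ℂ} {m n : ℕ} (hf : HasValuationAtInf f m)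
    (hmn : m < n) : ¬ ValuationAtInfGE f n := fun hge =>
  let ⟨_, ha0, ha⟩ := hf; ha0 (tendsto_nhds_unique ha (hge.tendsto_zero hmn))

lemma ValuationAtInfGE.mul {f g : ℍ → ℂ} {n : ℕ} {b : ℂ} (hf : ValuationAtInfGE f n)
    (hg : Tendsto g atImInfty (𝓝 b)) : ValuationAtInfGE (f * g) n :=
  let ⟨a, ha⟩ := hf; ⟨a * b, (ha.mul hg).congr fun τ => by simp only [Pi.mul_apply]; ring⟩

lemma hasValuationAtInf_sum {ι : Type*} {f : ι → ℍ → ℂ} {v : ι → ℕ}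
    (hf : ∀ i, HasValuationAtInf (f i) (v i)) (hv : Function.Injective v) {s : Finset ι}
    {c : ι → ℂ} (hc : ∀ i ∈ s, c i ≠ 0) {i₀ : ι} (hi₀ : i₀ ∈ s) (hmin : ∀ i ∈ s, v i₀ ≤ v i) :
    HasValuationAtInf (fun τ => ∑ i ∈ s, c i * f i τ) (v i₀) := by
  classical
  choose a ha0 ha using hf
  refine ⟨c i₀ * a i₀, mul_ne_zero (hc i₀ hi₀) (ha0 i₀), ?_⟩
  have hterm : ∀ i ∈ s,
      Tendsto (fun τ => c i * f i τ / cexp (2 * Real.pi * Complex.I * v i₀ * τ)) atImInfty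
        (𝓝 (if i = i₀ then c i₀ * a i₀ else 0)) := by
    intro i hi
    simp_rw [mul_div_assoc]
    split_ifs with h
    · subst h; exact (ha i).const_mul _
    · have hlt : v i₀ < v i := (hmin i hi).lt_of_ne (hv.ne (Ne.symm h))
      simpa using (tendsto_div_cexp_of_lt hlt (ha i)).const_mul (c i)
  simpa [Finset.sum_div, hi₀] using tendsto_finsetSum s hterm

end Valuation

lemma ModularFormClass.exists_tendsto_atImInfty {Γ : Subgroup (GL (Fin 2) ℝ)} {k : ℤ}
    {F : Type*} [FunLike F ℍ ℂ] [ModularFormClass F Γ k] (f : F) {h : ℝ} (hh : 0 < h)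
    (hΓ : h ∈ Γ.strictPeriods) :
    ∃ c, Tendsto f atImInfty (𝓝 c) :=
  ⟨_, ((ModularFormClass.analyticAt_cuspFunction_zero f hh hΓ).continuousAt.tendsto.comp
    (qParam_tendsto_atImInfty hh)).congr
    fun τ => SlashInvariantFormClass.eq_cuspFunction f τ hΓ hh.ne'⟩

namespace ModularForm

variable {Γ : Subgroup SL(2, ℤ)}

noncomputable def div {k₁ k₂ : ℤ} (Ψ : ModularForm Γ k₁) (Φ : ModularForm Γ k₂)
    (hΦ : ∀ τ, Φ τ ≠ 0) (hbdd : ∀ {c}, IsCusp c Γ → c.IsBoundedAt (⇑Ψ / ⇑Φ) (k₁ - k₂)) :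
    ModularForm Γ (k₁ - k₂) where
  toFun := ⇑Ψ / ⇑Φ
  slash_action_eq' γ hγ := by
    obtain ⟨γ, hγ, rfl⟩ := hγ
    change (⇑Ψ / ⇑Φ) ∣[k₁ - k₂] γ = _
    have hΨ : ⇑Ψ ∣[k₁] γ = Ψ := SlashInvariantForm.slash_action_eqn Ψ _ ⟨γ, hγ, rfl⟩
    have hΦ' : ⇑Φ ∣[k₂] γ = Φ := SlashInvariantForm.slash_action_eqn Φ _ ⟨γ, hγ, rfl⟩
    rw [div_slash_SL2, hΨ, hΦ']
  holo' := Ψ.holo'.div Φ.holo' hΦ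
  bdd_at_cusps' := hbdd

@[simp]
lemma div_apply {k₁ k₂ : ℤ} (Ψ : ModularForm Γ k₁) (Φ : ModularForm Γ k₂) (hΦ : ∀ τ, Φ τ ≠ 0)
    (hbdd : ∀ {c}, IsCusp c Γ → c.IsBoundedAt (⇑Ψ / ⇑Φ) (k₁ - k₂)) (τ : ℍ) :
    div Ψ Φ hΦ hbdd τ = Ψ τ / Φ τ :=
  rfl

def mulLeftₗ {a b c : ℤ} (Φ : ModularForm Γ a) (h : a + b = c) :
    ModularForm Γ b →ₗ[ℂ] ModularForm Γ c where
  toFun g := mcast h (Φ.mul g)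
  map_add' g₁ g₂ := by ext τ; exact mul_add (Φ τ) (g₁ τ) (g₂ τ)
  map_smul' r g := by ext τ; exact mul_left_comm (Φ τ) r (g τ)

@[simp]
lemma mulLeftₗ_apply {a b c : ℤ} (Φ : ModularForm Γ a) (h : a + b = c) (g : ModularForm Γ b)
    (τ : ℍ) : Φ.mulLeftₗ h g τ = Φ τ * g τ :=
  rfl

lemma mulLeftₗ_injective {a b c : ℤ} {Φ : ModularForm Γ a} (hΦ : ∀ τ, Φ τ ≠ 0)
    (h : a + b = c) : Function.Injective (Φ.mulLeftₗ h) := fun g₁ g₂ hg => by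
  ext τ
  exact mul_left_cancel₀ (hΦ τ) (by simpa using DFunLike.congr_fun hg τ)

end ModularForm

section StrongModularUnit

open CongruenceSubgroup

variable {N : ℕ} {k₁ k₂ : ℤ} {Φ : ModularForm (Gamma0 N) k₂}

lemma tendsto_div_of_valuationAtInfGE {Ψ : ModularForm (Gamma0 N) k₁} {n : ℕ}
    (hΦ : HasValuationAtInf Φ n) (hΨ : ValuationAtInfGE Ψ n) :
    ∃ c, Tendsto (⇑Ψ / ⇑Φ) atImInfty (𝓝 c) := by
  obtain ⟨a, ha0, ha⟩ := hΦ
  obtain ⟨b, hb⟩ := hΨ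
  exact ⟨b / a, (hb.div ha ha0).congr fun τ =>
    div_div_div_cancel_right₀ (Complex.exp_ne_zero _) _ _⟩

/-- At a cusp `γ • ∞` with `γ ∉ Γ₀(N)` the unit `Φ ∣ γ` has a nonzero limit; at `∞` (up to
`Γ₀(N)`) the valuation bound on `Ψ` compensates the zero of `Φ`. -/
lemma IsStrongModularUnit.isBoundedAt_div (hΦ : IsStrongModularUnit Φ) {n : ℕ}
    (hν : HasValuationAtInf Φ n) {Ψ : ModularForm (Gamma0 N) k₁} (hΨ : ValuationAtInfGE Ψ n)
    {c : OnePoint ℝ} (hc : IsCusp c (Gamma0 N)) : c.IsBoundedAt (⇑Ψ / ⇑Φ) (k₁ - k₂) := by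
  obtain ⟨γ, rfl⟩ := isCusp_SL2Z_iff'.mp (hc.mono (by rintro _ ⟨x, -, rfl⟩; exact ⟨x, rfl⟩))
  rw [OnePoint.isBoundedAt_iff rfl]
  change IsBoundedAtImInfty ((⇑Ψ / ⇑Φ) ∣[k₁ - k₂] γ)
  rw [div_slash_SL2]
  by_cases hγ : γ ∈ Gamma0 N
  · have hΨ' : ⇑Ψ ∣[k₁] γ = Ψ := SlashInvariantForm.slash_action_eqn Ψ _ ⟨γ, hγ, rfl⟩
    have hΦ' : ⇑Φ ∣[k₂] γ = Φ := SlashInvariantForm.slash_action_eqn Φ _ ⟨γ, hγ, rfl⟩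
    rw [hΨ', hΦ']
    obtain ⟨_, hlim⟩ := tendsto_div_of_valuationAtInfGE hν hΨ
    exact hlim.isBigO_one ℝ
  · obtain ⟨a, ha0, ha⟩ := hΦ.2.2 γ hγ
    rw [div_eq_mul_inv]
    exact (ModularFormClass.bdd_at_cusps Ψ hc _ rfl).mul ((ha.inv₀ ha0).isBigO_one ℝ)

lemma IsStrongModularUnit.mem_range_mulLeftₗ_iff (hΦ : IsStrongModularUnit Φ) {n : ℕ}
    (hν : HasValuationAtInf Φ n) {k : ℤ} (h : k₂ + k₁ = k) (Ψ : ModularForm (Gamma0 N) k) :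
    Ψ ∈ LinearMap.range (Φ.mulLeftₗ h) ↔ ValuationAtInfGE Ψ n := by
  constructor
  · rintro ⟨g, rfl⟩
    obtain ⟨_, hg⟩ := ModularFormClass.exists_tendsto_atImInfty g one_pos (by simp)
    exact hν.valuationAtInfGE.mul hg
  · intro hΨ
    subst h
    refine ⟨mcast (add_sub_cancel_left k₂ k₁)
      (ModularForm.div Ψ Φ hΦ.1 (hΦ.isBoundedAt_div hν hΨ)), ?_⟩
    ext τ
    simp [mul_div_cancel₀ _ (hΦ.1 τ)]

end StrongModularUnit

/-- A nonzero combination of basis vectors of valuation `< n` has the valuation of its lowest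
term, so it is not in `W`. -/
lemma isCompl_span_of_valuationAtInfGE {Γ : Subgroup (GL (Fin 2) ℝ)} [Γ.HasDetOne] {k : ℤ}
    {n : ℕ} {W : Submodule ℂ (ModularForm Γ k)} (hW : ∀ Ψ, Ψ ∈ W ↔ ValuationAtInfGE Ψ n)
    {ι : Type*} (B : Module.Basis ι ℂ (ModularForm Γ k)) {v : ι → ℕ}
    (hB : ∀ i, HasValuationAtInf (B i) (v i)) (hv : Function.Injective v) :
    IsCompl W (Submodule.span ℂ (B '' {i | v i < n})) := by
  constructor
  · rw [Submodule.disjoint_def]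
    intro Ψ hΨW hΨV
    by_contra hΨ0
    have hsupp : (B.repr Ψ).support.Nonempty := by simpa using hΨ0
    obtain ⟨i₀, hi₀, hmin⟩ := (B.repr Ψ).support.exists_min_image v hsupp
    have hval : HasValuationAtInf Ψ (v i₀) := by
      convert hasValuationAtInf_sum hB hv (fun i hi => (B.repr Ψ).mem_support_iff.mp hi) hi₀ hmin
      conv_lhs => rw [← B.linearCombination_repr Ψ]
      simp [Finsupp.linearCombination_apply, Finsupp.sum]
    exact hval.not_valuationAtInfGE (B.mem_span_image.mp hΨV hi₀) ((hW Ψ).mp hΨW)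
  · rw [codisjoint_iff, eq_top_iff, ← B.span_eq, Submodule.span_le]
    rintro _ ⟨i, rfl⟩
    rcases lt_or_ge (v i) n with hi | hi
    · exact Submodule.mem_sup_right (Submodule.subset_span ⟨i, hi, rfl⟩)
    · exact Submodule.mem_sup_left ((hW _).mpr ((hB i).valuationAtInfGE.mono hi))

theorem stmt_19_general (N : ℕ) (ℓ k : ℕ)
    (Φ : ModularForm (CongruenceSubgroup.Gamma0 N) (2 * ℓ))
    (hΦ : IsStrongModularUnit Φ)
    (nΦ : ℕ) (hν : HasValuationAtInf Φ nΦ) :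
    ∃ T : ModularForm (CongruenceSubgroup.Gamma0 N) (2 * k - 2 * ℓ) →ₗ[ℂ]
        ModularForm (CongruenceSubgroup.Gamma0 N) (2 * k),
      (∀ g τ, T g τ = Φ τ * g τ) ∧
      Function.Injective T ∧
      (∀ Ψ : ModularForm (CongruenceSubgroup.Gamma0 N) (2 * k),
        Ψ ∈ LinearMap.range T ↔ ValuationAtInfGE Ψ nΦ) ∧
      ∀ (d : ℕ) (B : Module.Basis (Fin d) ℂ (ModularForm (CongruenceSubgroup.Gamma0 N) (2 * k)))
        (v : Fin d → ℕ), (∀ i, HasValuationAtInf (B i) (v i)) → StrictMono v →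
        IsCompl (LinearMap.range T)
          (Submodule.span ℂ (B '' {i : Fin d | v i < nΦ})) := by
  have hweight : (2 * ℓ : ℤ) + (2 * k - 2 * ℓ) = 2 * k := by ring
  have hrange := hΦ.mem_range_mulLeftₗ_iff hν hweight
  exact ⟨Φ.mulLeftₗ hweight, fun _ _ => rfl, ModularForm.mulLeftₗ_injective hΦ.1 hweight, hrange,
    fun _ B _ hB hv => isCompl_span_of_valuationAtInfGE hrange B hB hv.injective⟩

/-- Multiplication by the strong modular unit `Φ` (equivalently, the inverse of the
map `Ψ ↦ Ψ/Φ`) is an injective linear map from `M_{2k-2ℓ}(Γ₀(N))` to `M_{2k}(Γ₀(N))`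
whose range is exactly the subspace of forms of valuation at least `ν(Φ)`.
Consequently, given an upper-triangular basis `B` of `M_{2k}(Γ₀(N))` (valuations
strictly increasing), `M_{2k}(Γ₀(N)) = Φ·M_{2k-2ℓ}(Γ₀(N)) ⊕ V`, where `V` is spanned
by the basis elements of valuation less than `ν(Φ)`. -/
theorem stmt_19 (N : ℕ) (hN : 1 ≤ N) (ℓ k : ℕ) (hk : ℓ ≤ k)
    (Φ : ModularForm (CongruenceSubgroup.Gamma0 N) (2 * ℓ))
    (hΦ : IsStrongModularUnit Φ)
    (nΦ : ℕ) (hν : HasValuationAtInf Φ nΦ) :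
    ∃ T : ModularForm (CongruenceSubgroup.Gamma0 N) (2 * k - 2 * ℓ) →ₗ[ℂ]
        ModularForm (CongruenceSubgroup.Gamma0 N) (2 * k),
      (∀ g τ, T g τ = Φ τ * g τ) ∧
      Function.Injective T ∧
      (∀ Ψ : ModularForm (CongruenceSubgroup.Gamma0 N) (2 * k),
        Ψ ∈ LinearMap.range T ↔ ValuationAtInfGE Ψ nΦ) ∧
      ∀ (d : ℕ) (B : Module.Basis (Fin d) ℂ (ModularForm (CongruenceSubgroup.Gamma0 N) (2 * k)))
        (v : Fin d → ℕ), (∀ i, HasValuationAtInf (B i) (v i)) → StrictMono v →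
        IsCompl (LinearMap.range T)
          (Submodule.span ℂ (B '' {i : Fin d | v i < nΦ})) :=
  stmt_19_general N ℓ k Φ hΦ nΦ hν
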